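/- arXiv:1311.2427 — 3 statements merged into one kernel-verified Lean document; each statement's English description precedes it below -/
import Mathlib

section
/- If for all n ≥ 2 and m ≥ 2 one has per((H_{2^n} ⊗ I_{2^m})(I_{2^n} ⊗ H_{2^m})) ≥ per(H_{2^n} ⊗ I_{2^m}) · per(I_{2^n} ⊗ H_{2^m}), then per(H_{2^k}) > 0 for all k > 2. -/
open Matrix Kronecker

def H2 : Matrix (Fin 2) (Fin 2) ℤ := !![1, 1; 1, -1]

/-- The Sylvester Hadamard matrix of order `2^k`, the Kronecker product of `k` copies of `H2`,
indexed by `k`-tuples (the entry at a pair of tuples is the product of the corresponding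
entries of the factors). -/
def sylvester (k : ℕ) : Matrix (Fin k → Fin 2) (Fin k → Fin 2) ℤ :=
  fun g h => ∏ i, H2 (g i) (h i)

/-! Write `k = 2 + m` with `m ≥ 2`. Sylvester's construction gives
`H_{2^k} = H_4 ⊗ H_{2^m} = (H_4 ⊗ I)(I ⊗ H_{2^m})`, and `per (A ⊗ I_N) = per (I_N ⊗ A) = (per A)^N`
since both are block diagonal up to a simultaneous permutation of rows and columns. The
hypothesis therefore bounds `per H_{2^k}` below by `(per H_4)^{2^m} (per H_{2^m})^4`, and strong
induction on `k` reduces positivity to the base cases `per H_4 = 8` and `per H_8 = 384`, which are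
computed. -/

namespace List

variable {α M : Type*} [AddCommMonoid M]

def sumPick (f : α → List α → M) : List α → M
  | [] => 0
  | x :: xs => f x xs + sumPick (fun y ys => f y (x :: ys)) xs

theorem sumPick_ofFn {n : ℕ} (f : α → List α → M) (v : Fin (n + 1) → α) :
    sumPick f (ofFn v) = ∑ i, f (v i) (ofFn (v ∘ i.succAbove)) := by
  induction n generalizing f with
  | zero => simp [sumPick]
  | succ n ih =>
    rw [ofFn_succ, sumPick, ih, Fin.sum_univ_succ (n := n + 1)]
    congr 1
    refine Fintype.sum_congr _ _ fun i => ?_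
    rw [ofFn_succ (f := v ∘ i.succ.succAbove)]
    simp [Function.comp_def, Fin.succ_succAbove_succ]

end List

namespace Matrix

variable {m n o R : Type*} [CommSemiring R]

theorem permanent_submatrix_equiv_self [Fintype m] [DecidableEq m] [Fintype n] [DecidableEq n]
    (e : m ≃ n) (A : Matrix n n R) : (A.submatrix e e).permanent = A.permanent := by
  refine Fintype.sum_equiv e.permCongr _ _ fun σ => ?_
  rw [← e.prod_comp]
  simp [Equiv.permCongr_apply]

theorem permanent_succ_column_zero {k : ℕ} (A : Matrix (Fin k.succ) (Fin k.succ) R) :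
    A.permanent = ∑ i, A i 0 * (A.submatrix i.succAbove Fin.succ).permanent := by
  rw [permanent, Finset.univ_perm_fin_succ, ← Finset.univ_product_univ,
    Finset.sum_map, Finset.sum_product]
  refine Finset.sum_congr rfl fun p _ => ?_
  rw [permanent, Finset.mul_sum]
  simp only [Equiv.toEmbedding_apply]
  induction p using Fin.cases with
  | zero =>
    refine Finset.sum_congr rfl fun σ _ => ?_
    rw [Fin.prod_univ_succ]
    simp
  | succ i =>
    -- `decomposeFin` and `succAbove` order the remaining rows differently; `cycleRange i`
    -- translates between the two.
    rw [← (Group.mulLeft_bijective (Fin.cycleRange i)).sum_comp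
      (fun σ => A i.succ 0 * ∏ x, (A.submatrix i.succ.succAbove Fin.succ) (σ x) x)]
    refine Finset.sum_congr rfl fun σ _ => ?_
    rw [Fin.prod_univ_succ]
    simp [Fin.succAbove_cycleRange, Equiv.Perm.mul_apply]

/-- The permanent of the submatrix of `A` on the given rows and columns, expanded along its
first column. Unlike `permanent`, it can be evaluated by the kernel on an `8 × 8` matrix. -/
def permanentLaplace (A : Matrix m n R) : List m → List n → R
  | _, [] => 1
  | rows, c :: cols => rows.sumPick fun r rest => A r c * permanentLaplace A rest cols

theorem permanent_submatrix_eq_permanentLaplace {k : ℕ} (A : Matrix m n R)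
    (u : Fin k → m) (v : Fin k → n) :
    (A.submatrix u v).permanent = A.permanentLaplace (List.ofFn u) (List.ofFn v) := by
  induction k with
  | zero => exact permanent_isEmpty
  | succ k ih =>
    rw [permanent_succ_column_zero, List.ofFn_succ (f := v), permanentLaplace,
      List.sumPick_ofFn]
    refine Fintype.sum_congr _ _ fun i => ?_
    rw [← ih]
    rfl

theorem permanent_eq_permanentLaplace_ofFn [Fintype n] [DecidableEq n] {k : ℕ}
    (A : Matrix n n R) (e : Fin k ≃ n) :
    A.permanent = A.permanentLaplace (List.ofFn e) (List.ofFn e) := by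
  rw [← permanent_submatrix_equiv_self e, permanent_submatrix_eq_permanentLaplace]

theorem permanent_blockDiagonal [Fintype m] [DecidableEq m] [Fintype o] [DecidableEq o]
    (M : o → Matrix m m R) : (blockDiagonal M).permanent = ∏ k, (M k).permanent := by
  have range_prodCongrLeft (σ : Equiv.Perm (m × o)) (hσ : ∀ x, (σ x).2 = x.2) :
      σ ∈ Set.range fun τ : o → Equiv.Perm m => Equiv.prodCongrLeft τ := by
    have inj (k : o) : Function.Injective fun i => (σ (i, k)).1 := fun i j hij =>
      congr_arg Prod.fst <| σ.injective <| Prod.ext hij ((hσ (i, k)).trans (hσ (j, k)).symm)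
    refine ⟨fun k => Equiv.ofBijective _ (Finite.injective_iff_bijective.mp (inj k)), ?_⟩
    ext ⟨i, k⟩ <;> simp [hσ]
  simp only [permanent, Fintype.prod_sum]
  refine (Fintype.sum_of_injective (fun τ => Equiv.prodCongrLeft τ) ?_ _ _ ?_ ?_).symm
  · intro τ₁ τ₂ h
    ext k i
    exact congr_arg Prod.fst (Equiv.congr_fun h (i, k))
  · intro σ hσ
    obtain ⟨x, hx⟩ : ∃ x, (σ x).2 ≠ x.2 := by
      by_contra! h
      exact hσ (range_prodCongrLeft σ h)
    exact Finset.prod_eq_zero (Finset.mem_univ x) (blockDiagonal_apply_ne _ _ _ hx)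
  · intro τ
    simp [Fintype.prod_prod_type_right, blockDiagonal_apply_eq]

theorem permanent_kronecker_one [Fintype m] [DecidableEq m] [Fintype n] [DecidableEq n]
    (A : Matrix m m R) : (A ⊗ₖ (1 : Matrix n n R)).permanent = A.permanent ^ Fintype.card n := by
  rw [kronecker_one, permanent_blockDiagonal, Finset.prod_const, Finset.card_univ]

theorem permanent_one_kronecker [Fintype m] [DecidableEq m] [Fintype n] [DecidableEq n]
    (A : Matrix m m R) : ((1 : Matrix n n R) ⊗ₖ A).permanent = A.permanent ^ Fintype.card n := by
  rw [one_kronecker, reindex_apply, permanent_submatrix_equiv_self, permanent_blockDiagonal,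
    Finset.prod_const, Finset.card_univ]

end Matrix

theorem sylvester_add (n m : ℕ) :
    (sylvester n ⊗ₖ sylvester m).submatrix (Fin.appendEquiv n m).symm (Fin.appendEquiv n m).symm =
      sylvester (n + m) := by
  ext g h
  simp [sylvester, Fin.prod_univ_add]

theorem permanent_sylvester_add (n m : ℕ) :
    (sylvester (n + m)).permanent = (sylvester n ⊗ₖ sylvester m).permanent := by
  rw [← sylvester_add, permanent_submatrix_equiv_self]

theorem permanent_sylvester_two : (sylvester 2).permanent = 8 := by
  rw [permanent_eq_permanentLaplace_ofFn _ finFunctionFinEquiv.symm]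
  decide +kernel

theorem permanent_sylvester_three : (sylvester 3).permanent = 384 := by
  rw [permanent_eq_permanentLaplace_ofFn _ finFunctionFinEquiv.symm]
  decide +kernel

theorem permanent_sylvester_pos
    (hyp : ∀ n m : ℕ, 2 ≤ n → 2 ≤ m →
      ((sylvester n ⊗ₖ (1 : Matrix (Fin m → Fin 2) (Fin m → Fin 2) ℤ)) *
          ((1 : Matrix (Fin n → Fin 2) (Fin n → Fin 2) ℤ) ⊗ₖ sylvester m)).permanent ≥
        (sylvester n ⊗ₖ (1 : Matrix (Fin m → Fin 2) (Fin m → Fin 2) ℤ)).permanent *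
          ((1 : Matrix (Fin n → Fin 2) (Fin n → Fin 2) ℤ) ⊗ₖ sylvester m).permanent) :
    ∀ k : ℕ, 2 < k → 0 < (sylvester k).permanent := by
  suffices h : ∀ k, 2 ≤ k → 0 < (sylvester k).permanent from fun k hk => h k hk.le
  intro k hk
  induction k using Nat.strong_induction_on with
  | _ k ih =>
  obtain rfl | rfl | hk4 : k = 2 ∨ k = 3 ∨ 4 ≤ k := by omega
  · simp [permanent_sylvester_two]
  · simp [permanent_sylvester_three]
  obtain ⟨m, rfl⟩ : ∃ m, k = 2 + m := ⟨k - 2, by omega⟩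
  have hm : 2 ≤ m := by omega
  have hm_pos := ih m (by omega) hm
  calc
    0 < (sylvester 2).permanent ^ Fintype.card (Fin m → Fin 2) *
        (sylvester m).permanent ^ Fintype.card (Fin 2 → Fin 2) := by
      rw [permanent_sylvester_two]
      positivity
    _ = (sylvester 2 ⊗ₖ (1 : Matrix (Fin m → Fin 2) (Fin m → Fin 2) ℤ)).permanent *
        ((1 : Matrix (Fin 2 → Fin 2) (Fin 2 → Fin 2) ℤ) ⊗ₖ sylvester m).permanent := by
      rw [permanent_kronecker_one, permanent_one_kronecker]
    _ ≤ _ := hyp 2 m le_rfl hm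
    _ = (sylvester (2 + m)).permanent := by
      rw [← mul_kronecker_mul, Matrix.one_mul, Matrix.mul_one, permanent_sylvester_add]
end

section
/- Let H be the Sylvester Hadamard matrix of order n = 2^p with p ∈ {1,2,3,4}, and let k ∈ {1,…,p-1}. For any subset α of rows of H with |α| = 2^k, there exists at least one column j of H such that ∑_{i∈α} H(i,j) = 0. -/
/-!
Write `S h = ∑ g ∈ α, (-1) ^ (g ⬝ᵥ h)` for the column sums. Orthogonality of the rows gives
Parseval's identity `∑ h, S h ^ 2 = 2 ^ p * 2 ^ k`, at most `8 * 2 ^ p` when `k ≤ 3`. Every `S h`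
is even, and it is divisible by 4 exactly when `σ ⬝ᵥ h = 2 ^ (k - 1)` in `ZMod 2`, where
`σ = ∑ g ∈ α, g`; this happens on at least half of the columns (on all of them if `σ = 0`, which
forces `k ≥ 2`). If no `S h` vanished, `S h ^ 2` would be at least 16 on that half and at least 4
elsewhere, so `∑ h, S h ^ 2 ≥ 10 * 2 ^ p`, a contradiction.
-/

def ip (p : ℕ) (g h : Fin p → ZMod 2) : ℕ := ∑ i, (g i * h i).val

/-- The Sylvester Hadamard matrix of order `2^p` in cocyclic form. -/
def sylv (p : ℕ) : Matrix (Fin p → ZMod 2) (Fin p → ZMod 2) ℤ :=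
  fun g h => (-1) ^ ip p g h

open Finset Matrix

namespace Sylvester

variable {p : ℕ}

lemma card_fun_fin_zmod_two : Fintype.card (Fin p → ZMod 2) = 2 ^ p := by
  simp [ZMod.card]

lemma neg_one_pow_eq_neg_one_pow_val_cast (n : ℕ) : (-1 : ℤ) ^ n = (-1) ^ (n : ZMod 2).val := by
  rw [ZMod.val_natCast, ← neg_one_pow_eq_pow_mod_two]

lemma neg_one_pow_val_add (a b : ZMod 2) :
    (-1 : ℤ) ^ (a + b).val = (-1) ^ a.val * (-1) ^ b.val := by
  rw [ZMod.val_add, ← neg_one_pow_eq_pow_mod_two, pow_add]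

lemma neg_one_pow_val_eq_one_sub_two_mul (a : ZMod 2) : (-1 : ℤ) ^ a.val = 1 - 2 * a.val := by
  fin_cases a <;> rfl

lemma sylv_apply (g h : Fin p → ZMod 2) : sylv p g h = (-1) ^ (g ⬝ᵥ h).val := by
  rw [sylv, ip, neg_one_pow_eq_neg_one_pow_val_cast]
  push_cast [ZMod.natCast_val, ZMod.cast_id']
  rfl

lemma sylv_add_left (g g' h : Fin p → ZMod 2) : sylv p (g + g') h = sylv p g h * sylv p g' h := by
  simp only [sylv_apply, add_dotProduct, neg_one_pow_val_add]

lemma sylv_zero_left (h : Fin p → ZMod 2) : sylv p 0 h = 1 := by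
  simp [sylv_apply]

lemma sylv_add_right_of_dotProduct_eq_one {g δ : Fin p → ZMod 2} (hδ : g ⬝ᵥ δ = 1)
    (h : Fin p → ZMod 2) : sylv p g (h + δ) = -sylv p g h := by
  rw [sylv_apply, sylv_apply, dotProduct_add, neg_one_pow_val_add, hδ]
  exact mul_neg_one _

lemma exists_dotProduct_eq_one {σ : Fin p → ZMod 2} (hσ : σ ≠ 0) : ∃ δ, σ ⬝ᵥ δ = 1 := by
  obtain ⟨i, hi⟩ := Function.ne_iff.mp hσ
  refine ⟨Pi.single i 1, ?_⟩
  rw [dotProduct_single, mul_one]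
  exact (by decide : ∀ a : ZMod 2, a ≠ 0 → a = 1) _ hi

lemma sum_sylv_eq_zero {σ : Fin p → ZMod 2} (hσ : σ ≠ 0) : ∑ h, sylv p σ h = 0 := by
  obtain ⟨δ, hδ⟩ := exists_dotProduct_eq_one hσ
  have hneg : ∑ h, sylv p σ h = -∑ h, sylv p σ h := by
    calc ∑ h, sylv p σ h = ∑ h, sylv p σ (h + δ) := (Equiv.sum_comp (Equiv.addRight δ) _).symm
      _ = -∑ h, sylv p σ h := by
        simp only [sylv_add_right_of_dotProduct_eq_one hδ, sum_neg_distrib]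
  omega

lemma sum_sylv_mul_sylv (g g' : Fin p → ZMod 2) :
    ∑ h, sylv p g h * sylv p g' h = if g = g' then 2 ^ p else 0 := by
  simp_rw [← sylv_add_left]
  split_ifs with hg
  · simp [hg, ZModModule.add_self, sylv_zero_left]
  · refine sum_sylv_eq_zero fun h0 => hg ?_
    rwa [add_eq_zero_iff_eq_neg, ZModModule.neg_eq_self] at h0

lemma sum_sq_sum_sylv (α : Finset (Fin p → ZMod 2)) :
    ∑ h, (∑ g ∈ α, sylv p g h) ^ 2 = 2 ^ p * #α := by
  simp_rw [sq, sum_mul_sum]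
  rw [sum_comm]
  simp_rw [sum_comm (s := univ), sum_sylv_mul_sylv, sum_ite_eq, sum_ite_mem, inter_self, sum_const]
  simp [mul_comm]

lemma sum_sylv_eq_card_sub (α : Finset (Fin p → ZMod 2)) (h : Fin p → ZMod 2) :
    ∑ g ∈ α, sylv p g h = #α - 2 * ∑ g ∈ α, ((g ⬝ᵥ h).val : ℤ) := by
  simp only [sylv_apply, neg_one_pow_val_eq_one_sub_two_mul, sum_sub_distrib, ← mul_sum]
  simp

lemma two_dvd_sum_sylv {α : Finset (Fin p → ZMod 2)} (hα : Even #α) (h : Fin p → ZMod 2) :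
    2 ∣ ∑ g ∈ α, sylv p g h := by
  rw [sum_sylv_eq_card_sub]
  exact dvd_sub (Int.natCast_dvd_natCast.mpr hα.two_dvd) (dvd_mul_right _ _)

/-- The column sum is `2 (2^k - w)` with `w` the number of `-1` entries, and
`w ≡ (∑ g ∈ α, g) ⬝ᵥ h` mod 2. -/
lemma four_dvd_sum_sylv {k : ℕ} {α : Finset (Fin p → ZMod 2)} (hα : #α = 2 ^ (k + 1))
    {h : Fin p → ZMod 2} (hh : (∑ g ∈ α, g) ⬝ᵥ h = 2 ^ k) : 4 ∣ ∑ g ∈ α, sylv p g h := by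
  have hw : ((2 : ℕ) : ℤ) ∣ 2 ^ k - ∑ g ∈ α, ((g ⬝ᵥ h).val : ℤ) := by
    rw [← ZMod.intCast_zmod_eq_zero_iff_dvd]
    push_cast [ZMod.natCast_val, ZMod.cast_id', ← sum_dotProduct, hh]
    exact sub_self _
  obtain ⟨m, hm⟩ := hw
  exact ⟨m, by rw [sum_sylv_eq_card_sub, hα]; push_cast; linear_combination 2 * hm⟩

lemma sq_le_sq_of_dvd {a b : ℤ} (hab : a ∣ b) (hb : b ≠ 0) : a ^ 2 ≤ b ^ 2 :=
  Int.natAbs_le_iff_sq_le.mp (Int.natAbs_le_of_dvd_ne_zero hab hb)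

section ColumnSums

variable {k : ℕ} {α : Finset (Fin p → ZMod 2)} {h : Fin p → ZMod 2}

lemma four_le_sq_sum_sylv (hα : Even #α) (hS : ∑ g ∈ α, sylv p g h ≠ 0) :
    4 ≤ (∑ g ∈ α, sylv p g h) ^ 2 :=
  le_of_eq_of_le (by norm_num) (sq_le_sq_of_dvd (two_dvd_sum_sylv hα h) hS)

lemma sixteen_le_sq_sum_sylv (hα : #α = 2 ^ (k + 1)) (hh : (∑ g ∈ α, g) ⬝ᵥ h = 2 ^ k)
    (hS : ∑ g ∈ α, sylv p g h ≠ 0) : 16 ≤ (∑ g ∈ α, sylv p g h) ^ 2 :=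
  le_of_eq_of_le (by norm_num) (sq_le_sq_of_dvd (four_dvd_sum_sylv hα hh) hS)

lemma sum_ne_zero_of_card_eq_two (hα : #α = 2) : ∑ g ∈ α, g ≠ 0 := by
  obtain ⟨a, b, hab, rfl⟩ := card_eq_two.mp hα
  rwa [sum_pair hab, Ne, add_eq_zero_iff_eq_neg, ZModModule.neg_eq_self]

/-- Translating by `δ` flips the value of `(∑ g ∈ α, g) ⬝ᵥ ·`, so one of the columns `h`, `h + δ`
has its sum divisible by 4. -/
lemma twenty_le_sq_sum_sylv_add_sq_sum_sylv (hα : #α = 2 ^ (k + 1)) {δ : Fin p → ZMod 2}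
    (hδ : (∑ g ∈ α, g) ⬝ᵥ δ = 1) (hS : ∀ h, ∑ g ∈ α, sylv p g h ≠ 0) (h : Fin p → ZMod 2) :
    20 ≤ (∑ g ∈ α, sylv p g h) ^ 2 + (∑ g ∈ α, sylv p g (h + δ)) ^ 2 := by
  have hEven : Even #α := hα ▸ (Nat.even_pow.mpr ⟨even_two, k.succ_ne_zero⟩)
  have hflip : (∑ g ∈ α, g) ⬝ᵥ (h + δ) = (∑ g ∈ α, g) ⬝ᵥ h + 1 := by rw [dotProduct_add, hδ]
  rcases (by decide : ∀ a c : ZMod 2, a = c ∨ a + 1 = c) ((∑ g ∈ α, g) ⬝ᵥ h) (2 ^ k) with hh | hh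
  · linarith [sixteen_le_sq_sum_sylv hα hh (hS h), four_le_sq_sum_sylv hEven (hS (h + δ))]
  · linarith [sixteen_le_sq_sum_sylv hα (hflip.trans hh) (hS (h + δ)),
      four_le_sq_sum_sylv hEven (hS h)]

lemma ten_mul_two_pow_le_sum_sq_sum_sylv (hα : #α = 2 ^ (k + 1))
    (hS : ∀ h, ∑ g ∈ α, sylv p g h ≠ 0) :
    10 * 2 ^ p ≤ ∑ h, (∑ g ∈ α, sylv p g h) ^ 2 := by
  by_cases hσ : ∑ g ∈ α, g = 0
  · obtain ⟨j, rfl⟩ : ∃ j, k = j + 1 :=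
      Nat.exists_eq_succ_of_ne_zero fun hk => sum_ne_zero_of_card_eq_two (by simpa [hk] using hα) hσ
    have hh : ∀ h, (∑ g ∈ α, g) ⬝ᵥ h = 2 ^ (j + 1) := fun h => by
      rw [hσ, zero_dotProduct, pow_succ, (by decide : (2 : ZMod 2) = 0), mul_zero]
    calc 10 * 2 ^ p ≤ ∑ _h : Fin p → ZMod 2, (16 : ℤ) := by
          rw [sum_const, card_univ, card_fun_fin_zmod_two, nsmul_eq_mul]
          push_cast
          linarith [pow_pos (two_pos : (0 : ℤ) < 2) p]
      _ ≤ _ := sum_le_sum fun h _ => sixteen_le_sq_sum_sylv hα (hh h) (hS h)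
  · obtain ⟨δ, hδ⟩ := exists_dotProduct_eq_one hσ
    have hpair : ∑ _h : Fin p → ZMod 2, (20 : ℤ) ≤ 2 * ∑ h, (∑ g ∈ α, sylv p g h) ^ 2 := by
      calc ∑ _h : Fin p → ZMod 2, (20 : ℤ)
          ≤ ∑ h, ((∑ g ∈ α, sylv p g h) ^ 2 + (∑ g ∈ α, sylv p g (h + δ)) ^ 2) :=
            sum_le_sum fun h _ => twenty_le_sq_sum_sylv_add_sq_sum_sylv hα hδ hS h
        _ = 2 * ∑ h, (∑ g ∈ α, sylv p g h) ^ 2 := by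
          rw [sum_add_distrib, two_mul]
          congr 1
          exact Equiv.sum_comp (Equiv.addRight δ) fun h => (∑ g ∈ α, sylv p g h) ^ 2
    rw [sum_const, card_univ, card_fun_fin_zmod_two, nsmul_eq_mul] at hpair
    push_cast at hpair
    linarith

end ColumnSums

theorem exists_sum_sylv_eq_zero {k : ℕ} (hk1 : 1 ≤ k) (hk3 : k ≤ 3) (α : Finset (Fin p → ZMod 2))
    (hα : #α = 2 ^ k) : ∃ h, ∑ g ∈ α, sylv p g h = 0 := by
  by_contra! hS
  obtain ⟨j, rfl⟩ : ∃ j, k = j + 1 := ⟨k - 1, by omega⟩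
  have hlower := ten_mul_two_pow_le_sum_sq_sum_sylv hα hS
  rw [sum_sq_sum_sylv, hα] at hlower
  have h8 : (2 : ℤ) ^ (j + 1) ≤ 8 := by
    calc (2 : ℤ) ^ (j + 1) ≤ 2 ^ 3 := pow_le_pow_right₀ (by norm_num) hk3
      _ = 8 := by norm_num
  push_cast at hlower
  nlinarith [pow_pos (two_pos : (0 : ℤ) < 2) p]

end Sylvester

open Sylvester in
theorem sylvester_subrows_vanishing_column (p k : ℕ) (hp : p ∈ ({1, 2, 3, 4} : Set ℕ))
    (hk1 : 1 ≤ k) (hk2 : k < p) (α : Finset (Fin p → ZMod 2)) (hα : α.card = 2 ^ k) :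
    ∃ h : Fin p → ZMod 2, ∑ g ∈ α, sylv p g h = 0 := by
  have hp4 : p ≤ 4 := by
    simp only [Set.mem_insert_iff, Set.mem_singleton_iff] at hp
    omega
  exact exists_sum_sylv_eq_zero hk1 (by omega) α hα
end

section
/- Suppose that for every subset of 2^{p-1} rows of the Sylvester Hadamard matrix of order 2^p there is a column whose sum over those rows vanishes. Let G be a p×2^{p-1} binary matrix whose columns are pairwise distinct vectors of F_2^p, viewed as a generator matrix of a binary linear code C of length 2^{p-1} and dimension ≤ p. Then C contains a codeword of Hamming weight exactly 2^{p-2}. -/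
theorem code_has_weight_codeword (p : ℕ)
    (hlem : ∀ α : Finset (Fin p → ZMod 2), α.card = 2 ^ (p - 1) →
      ∃ h : Fin p → ZMod 2, ∑ g ∈ α, (-1 : ℤ) ^ ip p g h = 0)
    (G : Matrix (Fin p) (Fin (2 ^ (p - 1))) (ZMod 2))
    (hG : Function.Injective fun j => fun i => G i j) :
    ∃ x : Fin p → ZMod 2,
      (Finset.univ.filter fun j => Matrix.vecMul x G j = 1).card = 2 ^ (p - 2) := by
  rcases Nat.lt_or_ge p 2 with hp | hp
  · exfalso
    have h1 : (2:ℕ) ^ (p-1) = 1 := by interval_cases p <;> rfl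
    obtain ⟨h, hh⟩ := hlem {fun _ => 0} (by simp [h1])
    simp [ip] at hh
  · set cols : Fin (2^(p-1)) → (Fin p → ZMod 2) := fun j i => G i j with hcols
    have hcard : (Finset.univ.image cols).card = 2^(p-1) := by
      rw [Finset.card_image_of_injective _ hG, Finset.card_univ, Fintype.card_fin]
    obtain ⟨h, hh⟩ := hlem _ hcard
    rw [Finset.sum_image (fun a _ b _ hab => hG hab)] at hh
    refine ⟨h, ?_⟩
    have key : ∀ j, (-1:ℤ) ^ ip p (cols j) h
        = 1 - 2 * ((Matrix.vecMul h G j).val : ℤ) := by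
      intro j
      have hv : ((ip p (cols j) h : ℕ) : ZMod 2) = Matrix.vecMul h G j := by
        simp [ip, Matrix.vecMul, dotProduct, Nat.cast_sum, ZMod.natCast_val,
          ZMod.cast_id, mul_comm, hcols]
      have hval : (Matrix.vecMul h G j).val = ip p (cols j) h % 2 := by
        rw [← hv, ZMod.val_natCast]
      rcases Nat.even_or_odd (ip p (cols j) h) with he | ho
      · rw [he.neg_one_pow, hval, Nat.even_iff.mp he]; ring
      · rw [ho.neg_one_pow, hval, Nat.odd_iff.mp ho]; ring
    rw [Finset.sum_congr rfl (fun j _ => key j)] at hh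
    rw [Finset.sum_sub_distrib, ← Finset.mul_sum] at hh
    simp only [Finset.sum_const, Finset.card_univ, Fintype.card_fin, nsmul_eq_mul, mul_one] at hh
    have hsum : (∑ j, ((Matrix.vecMul h G j).val : ℤ)) = 2 ^ (p-2) := by
      have h2 : (2:ℤ) ^ (p-1) = 2 * 2 ^ (p-2) := by
        rw [← pow_succ']
        congr 1
        omega
      push_cast at hh
      linarith [hh, h2]
    have hcardf : ((Finset.univ.filter fun j => Matrix.vecMul h G j = 1).card : ℤ)
        = ∑ j, ((Matrix.vecMul h G j).val : ℤ) := by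
      rw [Finset.card_filter]
      push_cast
      refine Finset.sum_congr rfl fun j _ => ?_
      have hall : ∀ s : ZMod 2, (if s = 1 then (1:ℤ) else 0) = (s.val : ℤ) := by decide
      exact hall _
    have := hcardf.trans hsum
    exact_mod_cast this
end
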